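/- arXiv:2104.06589 — 4 statements merged into one kernel-verified Lean document; each statement's English description precedes it below -/
import Mathlib

section
/- For any elements a, b, c, d of a real inner product space, the inner product of (10a − 15b + 6c − d) with a equals (1/2)[(‖a‖² − ‖b‖²) + (‖3a − b‖² − ‖3b − c‖²) + (‖3a − 3b + c‖² − ‖3b − 3c + d‖²) + ‖a − 3b + 3c − d‖²]. -/
open RealInnerProductSpace

theorem bdf_g_stability_identity
    {H : Type*} [NormedAddCommGroup H] [InnerProductSpace ℝ H]
    (a b c d : H) :
    ⟪(10:ℝ) • a - (15:ℝ) • b + (6:ℝ) • c - d, a⟫ =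
      (1/2) * ((‖a‖^2 - ‖b‖^2)
        + (‖(3:ℝ) • a - b‖^2 - ‖(3:ℝ) • b - c‖^2)
        + (‖(3:ℝ) • a - (3:ℝ) • b + c‖^2 - ‖(3:ℝ) • b - (3:ℝ) • c + d‖^2)
        + ‖a - (3:ℝ) • b + (3:ℝ) • c - d‖^2) := by
  simp only [← real_inner_self_eq_norm_sq, inner_sub_left, inner_sub_right,
    inner_add_left, inner_add_right, real_inner_smul_left, real_inner_smul_right,
    real_inner_comm b a, real_inner_comm c a, real_inner_comm d a,
    real_inner_comm c b, real_inner_comm d b, real_inner_comm d c]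
  ring
end

section
/- Let u : ℝ → ℝ be three times continuously differentiable and let Δt > 0. Set t_k = t₀ + kΔt for k = 0,1,2,3. Then |(10u(t₃) − 15u(t₂) + 6u(t₁) − u(t₀))/(6Δt) − u'(t₃)|² ≤ (7/3) Δt³ ∫_{t₀}^{t₃} |u'''(s)|² ds. -/
/-!
Expanding `u` about `t₃ = t₀ + 3Δt` with integral remainder, and writing each remainder over the
whole interval `[t₀, t₃]` with a truncated power `(s - tₖ)₊²`, the coefficients `-1, 6, -15, 10`
kill the terms in `u(t₃)` and `u''(t₃)` and leave exactly `6Δt u'(t₃)`. Hence the residual is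
`∫ K u⁽³⁾` for the Peano kernel `K`, a piecewise quadratic with `|K| ≤ (9/5) Δt²` on `[t₀, t₃]`,
and Cauchy–Schwarz gives `(∫ K u⁽³⁾)² ≤ (9/5)² · 3 Δt⁵ ∫ |u⁽³⁾|²`, well below
`(6Δt)² · (7/3) Δt³ ∫ |u⁽³⁾|²`.
-/

open intervalIntegral

theorem sq_intervalIntegral_mul_le {f g : ℝ → ℝ} (hf : Continuous f) (hg : Continuous g)
    {a b : ℝ} (hab : a ≤ b) :
    (∫ s in a..b, f s * g s) ^ 2 ≤ (∫ s in a..b, f s ^ 2) * ∫ s in a..b, g s ^ 2 := by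
  have hquad (x : ℝ) : 0 ≤ (∫ s in a..b, g s ^ 2) * (x * x)
      + (-2 * ∫ s in a..b, f s * g s) * x + ∫ s in a..b, f s ^ 2 := by
    have hexp : ∫ s in a..b, (x * g s - f s) ^ 2
        = ∫ s in a..b, (x * x) * g s ^ 2 - (2 * x) * (f s * g s) + f s ^ 2 :=
      integral_congr fun s _ => by ring
    rw [integral_add (Continuous.intervalIntegrable (by fun_prop) a b)
        (Continuous.intervalIntegrable (by fun_prop) a b),
      integral_sub (Continuous.intervalIntegrable (by fun_prop) a b)
        (Continuous.intervalIntegrable (by fun_prop) a b),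
      integral_const_mul, integral_const_mul] at hexp
    have hnonneg : 0 ≤ ∫ s in a..b, (x * g s - f s) ^ 2 :=
      integral_nonneg hab fun s _ => sq_nonneg _
    linarith
  have := discrim_le_zero hquad
  rw [discrim] at this
  linarith

theorem taylor_two_integral_remainder {u : ℝ → ℝ} (hu : ContDiff ℝ 3 u) (x₀ x : ℝ) :
    u x = u x₀ + deriv u x₀ * (x - x₀) + iteratedDeriv 2 u x₀ * (x - x₀) ^ 2 / 2
      + ∫ s in x₀..x, (x - s) ^ 2 / 2 * iteratedDeriv 3 u s := by
  rcases eq_or_ne x₀ x with rfl | hne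
  · simp
  have hwithin {k : ℕ} (hk : k ≤ 3) {s : ℝ} (hs : s ∈ Set.uIcc x₀ x) :
      iteratedDerivWithin k u (Set.uIcc x₀ x) s = iteratedDeriv k u s :=
    iteratedDerivWithin_eq_iteratedDeriv (uniqueDiffOn_uIcc hne)
      (hu.contDiffAt.of_le (by exact_mod_cast hk)) hs
  have h := taylor_integral_remainder (n := 2) (x₀ := x₀) (x := x) hu.contDiffOn
  rw [integral_congr fun s hs => by rw [hwithin le_rfl hs]] at h
  simp only [taylor_within_apply, Finset.sum_range_succ, Finset.sum_range_zero, smul_eq_mul,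
    hwithin, Set.left_mem_uIcc, Nat.reduceLeDiff, Nat.zero_le, Nat.one_le_ofNat, iteratedDeriv_zero,
    iteratedDeriv_one, Nat.factorial_zero, Nat.factorial_one, Nat.factorial_two] at h
  linear_combination h

theorem eq_taylor_two_sub_integral_truncSq {u : ℝ → ℝ} (hu : ContDiff ℝ 3 u) {a x b : ℝ}
    (hax : a ≤ x) (hxb : x ≤ b) :
    u x = u b + deriv u b * (x - b) + iteratedDeriv 2 u b * (x - b) ^ 2 / 2
      - ∫ s in a..b, max (s - x) 0 ^ 2 / 2 * iteratedDeriv 3 u s := by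
  have hcont : Continuous fun s => max (s - x) 0 ^ 2 / 2 * iteratedDeriv 3 u s := by
    have := hu.continuous_iteratedDeriv 3 le_rfl
    fun_prop
  have hleft : ∫ s in a..x, max (s - x) 0 ^ 2 / 2 * iteratedDeriv 3 u s = 0 := by
    rw [integral_congr fun s hs => ?_, integral_zero]
    rw [Set.uIcc_of_le hax] at hs
    simp [max_eq_right (sub_nonpos.mpr hs.2)]
  have hright : ∫ s in x..b, max (s - x) 0 ^ 2 / 2 * iteratedDeriv 3 u s
      = ∫ s in x..b, (x - s) ^ 2 / 2 * iteratedDeriv 3 u s := by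
    refine integral_congr fun s hs => ?_
    rw [Set.uIcc_of_le hxb] at hs
    simp only [max_eq_left (sub_nonneg.mpr hs.1)]
    ring
  rw [← integral_add_adjacent_intervals (hcont.intervalIntegrable a x)
    (hcont.intervalIntegrable x b), hleft, hright, integral_symm]
  linear_combination taylor_two_integral_remainder hu b x

noncomputable def blendedBDFKernel (t₀ Δt s : ℝ) : ℝ :=
  (max (s - t₀) 0 ^ 2 - 6 * max (s - (t₀ + 1*Δt)) 0 ^ 2 + 15 * max (s - (t₀ + 2*Δt)) 0 ^ 2) / 2

theorem continuous_blendedBDFKernel (t₀ Δt : ℝ) : Continuous (blendedBDFKernel t₀ Δt) := by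
  unfold blendedBDFKernel
  fun_prop

/-- The extremal value `-(9/5) Δt²` is attained at `s = t₀ + (12/5) Δt`. -/
theorem abs_blendedBDFKernel_le {t₀ Δt s : ℝ} (hΔt : 0 ≤ Δt) (hs : s ∈ Set.Icc t₀ (t₀ + 3*Δt)) :
    |blendedBDFKernel t₀ Δt s| ≤ 9/5 * Δt ^ 2 := by
  obtain ⟨h0, h3⟩ := hs
  rw [blendedBDFKernel, max_eq_left (sub_nonneg.mpr h0), abs_le]
  rcases le_total s (t₀ + 1*Δt) with h1 | h1
  · rw [max_eq_right (by linarith), max_eq_right (by linarith)]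
    constructor <;> nlinarith
  rcases le_total s (t₀ + 2*Δt) with h2 | h2
  · rw [max_eq_left (by linarith), max_eq_right (by linarith)]
    constructor <;> nlinarith
  · rw [max_eq_left (by linarith), max_eq_left (by linarith)]
    constructor <;> nlinarith [sq_nonneg (5 * (s - (t₀ + 2*Δt)) - 2 * Δt)]

theorem sq_intervalIntegral_mul_le_of_abs_le {K f : ℝ → ℝ} (hK : Continuous K) (hf : Continuous f)
    {a b M : ℝ} (hab : a ≤ b) (hKM : ∀ s ∈ Set.Icc a b, |K s| ≤ M) :
    (∫ s in a..b, K s * f s) ^ 2 ≤ M ^ 2 * (b - a) * ∫ s in a..b, f s ^ 2 := by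
  have hK2 : ∫ s in a..b, K s ^ 2 ≤ M ^ 2 * (b - a) := by
    calc ∫ s in a..b, K s ^ 2 ≤ ∫ _ in a..b, M ^ 2 :=
          integral_mono_on hab (Continuous.intervalIntegrable (by fun_prop) a b)
            intervalIntegrable_const fun s hs => sq_abs (K s) ▸
              pow_le_pow_left₀ (abs_nonneg _) (hKM s hs) 2
      _ = M ^ 2 * (b - a) := by rw [integral_const, smul_eq_mul, mul_comm]
  calc (∫ s in a..b, K s * f s) ^ 2 ≤ (∫ s in a..b, K s ^ 2) * ∫ s in a..b, f s ^ 2 :=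
        sq_intervalIntegral_mul_le hK hf hab
    _ ≤ M ^ 2 * (b - a) * ∫ s in a..b, f s ^ 2 :=
        mul_le_mul_of_nonneg_right hK2 (integral_nonneg hab fun s _ => sq_nonneg _)

theorem blendedBDF_residual_eq_integral {u : ℝ → ℝ} (hu : ContDiff ℝ 3 u) (t₀ : ℝ) {Δt : ℝ}
    (hΔt : 0 ≤ Δt) :
    10 * u (t₀ + 3*Δt) - 15 * u (t₀ + 2*Δt) + 6 * u (t₀ + 1*Δt) - u t₀
        - 6 * Δt * deriv u (t₀ + 3*Δt)
      = ∫ s in t₀..(t₀ + 3*Δt), blendedBDFKernel t₀ Δt s * iteratedDeriv 3 u s := by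
  have hu₃ := hu.continuous_iteratedDeriv 3 le_rfl
  have hR (x : ℝ) :
      IntervalIntegrable (fun s => max (s - x) 0 ^ 2 / 2 * iteratedDeriv 3 u s)
        MeasureTheory.volume t₀ (t₀ + 3*Δt) :=
    Continuous.intervalIntegrable (by fun_prop) _ _
  have hsplit : ∫ s in t₀..(t₀ + 3*Δt), blendedBDFKernel t₀ Δt s * iteratedDeriv 3 u s
      = (∫ s in t₀..(t₀ + 3*Δt), max (s - t₀) 0 ^ 2 / 2 * iteratedDeriv 3 u s)
        - 6 * (∫ s in t₀..(t₀ + 3*Δt), max (s - (t₀ + 1*Δt)) 0 ^ 2 / 2 * iteratedDeriv 3 u s)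
        + 15 * ∫ s in t₀..(t₀ + 3*Δt), max (s - (t₀ + 2*Δt)) 0 ^ 2 / 2 * iteratedDeriv 3 u s := by
    rw [← integral_const_mul, ← integral_const_mul, ← integral_sub (hR _) ((hR _).const_mul _),
      ← integral_add ((hR _).sub ((hR _).const_mul _)) ((hR _).const_mul _)]
    exact integral_congr fun s _ => by rw [blendedBDFKernel]; ring
  rw [hsplit]
  linear_combination
    -eq_taylor_two_sub_integral_truncSq hu (le_refl t₀) (by linarith : t₀ ≤ t₀ + 3*Δt)
    + 6 * eq_taylor_two_sub_integral_truncSq hu (by linarith : t₀ ≤ t₀ + 1*Δt)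
      (by linarith : t₀ + 1*Δt ≤ t₀ + 3*Δt)
    - 15 * eq_taylor_two_sub_integral_truncSq hu (by linarith : t₀ ≤ t₀ + 2*Δt)
      (by linarith : t₀ + 2*Δt ≤ t₀ + 3*Δt)

theorem blended_bdf_consistency
    (u : ℝ → ℝ) (hu : ContDiff ℝ 3 u) (t₀ Δt : ℝ) (hΔt : 0 < Δt) :
    |(10 * u (t₀ + 3*Δt) - 15 * u (t₀ + 2*Δt) + 6 * u (t₀ + 1*Δt) - u t₀) / (6*Δt)
        - deriv u (t₀ + 3*Δt)| ^ 2 ≤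
      (7/3) * Δt^3 * ∫ s in t₀..(t₀ + 3*Δt), |iteratedDeriv 3 u s| ^ 2 := by
  have hbound := sq_intervalIntegral_mul_le_of_abs_le (continuous_blendedBDFKernel t₀ Δt)
    (hu.continuous_iteratedDeriv 3 le_rfl) (by linarith)
    fun s hs => abs_blendedBDFKernel_le hΔt.le hs
  rw [← blendedBDF_residual_eq_integral hu t₀ hΔt.le] at hbound
  have hI : 0 ≤ ∫ s in t₀..(t₀ + 3*Δt), iteratedDeriv 3 u s ^ 2 :=
    integral_nonneg (by linarith) fun s _ => sq_nonneg _
  simp only [sq_abs]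
  rw [div_sub' (by positivity), div_pow, div_le_iff₀ (by positivity)]
  nlinarith [mul_nonneg (pow_nonneg hΔt.le 5) hI]
end

section
/- Let u : ℝ → ℝ be three times continuously differentiable and let Δt > 0. Set t_k = t₀ + kΔt for k = 0,1,2,3. Then |u(t₃) − 3u(t₂) + 3u(t₁) − u(t₀)|² ≤ 9 Δt⁵ ∫_{t₀}^{t₃} |u'''(s)|² ds. -/
open intervalIntegral Set
open MeasureTheory (volume)
open scoped fwdDiff

/-!
Iterate the mean value theorem along the forward differences: the derivative of `Δ_h^{n+1} f` is
`Δ_h^{n+1} f'`, so `|Δ_h^{n+2} f a| ≤ h · sup_{[a, a+h]} |Δ_h^{n+1} f'|`. At the bottom of the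
recursion `Δ_h g x = ∫_x^{x+h} g'`, which Cauchy–Schwarz bounds by `(h ∫_x^{x+h} |g'|²)^{1/2}`.
Altogether `|Δ_h^n f a|² ≤ h^{2n-1} ∫_a^{a+nh} |f^{(n)}|²`.
-/

theorem sq_intervalIntegral_le_mul_intervalIntegral_sq {f : ℝ → ℝ} {a b : ℝ} (hab : a ≤ b)
    (hf : IntervalIntegrable f volume a b)
    (hf2 : IntervalIntegrable (fun x => f x ^ 2) volume a b) :
    (∫ x in a..b, f x) ^ 2 ≤ (b - a) * ∫ x in a..b, f x ^ 2 := by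
  have hquad : ∀ c : ℝ, 0 ≤ (b - a) * (c * c) + (-2 * ∫ x in a..b, f x) * c +
      ∫ x in a..b, f x ^ 2 := by
    intro c
    have hexpand : ∫ x in a..b, (f x - c) ^ 2 =
        (b - a) * (c * c) + (-2 * ∫ x in a..b, f x) * c + ∫ x in a..b, f x ^ 2 := by
      simp_rw [sub_sq]
      rw [integral_add (hf2.sub ((hf.const_mul 2).mul_const c)) intervalIntegrable_const,
        integral_sub hf2 ((hf.const_mul 2).mul_const c), integral_mul_const, integral_const_mul,
        integral_const, smul_eq_mul]
      ring
    exact hexpand ▸ integral_nonneg hab fun x _ => sq_nonneg _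
  have := discrim_le_zero hquad
  rw [discrim] at this
  linarith

theorem HasDerivAt.fwdDiff {𝕜 F : Type*} [NontriviallyNormedField 𝕜] [NormedAddCommGroup F]
    [NormedSpace 𝕜 F] {f f' : 𝕜 → F} {x h : 𝕜} (hx : HasDerivAt f (f' x) x)
    (hxh : HasDerivAt f (f' (x + h)) (x + h)) : HasDerivAt (Δ_[h] f) (Δ_[h] f' x) x :=
  hxh.comp_add_const x h |>.sub hx

theorem hasDerivAt_fwdDiff_iter {𝕜 F : Type*} [NontriviallyNormedField 𝕜] [NormedAddCommGroup F]
    [NormedSpace 𝕜 F] {f f' : 𝕜 → F} (hf : ∀ x, HasDerivAt f (f' x) x) (h : 𝕜) (n : ℕ)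
    (x : 𝕜) : HasDerivAt ((Δ_[h])^[n] f) ((Δ_[h])^[n] f' x) x := by
  induction n generalizing x with
  | zero => exact hf x
  | succ n ih =>
    simp only [Function.iterate_succ_apply']
    exact (ih x).fwdDiff (ih (x + h))

theorem sq_fwdDiff_le_of_sq_deriv_le {f f' : ℝ → ℝ} {a h B : ℝ} (hh : 0 ≤ h)
    (hf : ∀ x ∈ Icc a (a + h), HasDerivAt f (f' x) x)
    (hB : ∀ x ∈ Icc a (a + h), f' x ^ 2 ≤ B) :
    Δ_[h] f a ^ 2 ≤ B * h ^ 2 := by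
  have ha : a ∈ Icc a (a + h) := left_mem_Icc.2 (by linarith)
  have hB₀ : 0 ≤ B := (sq_nonneg _).trans (hB a ha)
  have hmvt := norm_image_sub_le_of_norm_deriv_le_segment'
    (fun x hx => (hf x hx).hasDerivWithinAt)
    (fun x hx => Real.abs_le_sqrt (hB x (Ico_subset_Icc_self hx)))
    (a + h) (right_mem_Icc.2 (by linarith))
  rw [add_sub_cancel_left, Real.norm_eq_abs] at hmvt
  calc Δ_[h] f a ^ 2 = |f (a + h) - f a| ^ 2 := (sq_abs _).symm
    _ ≤ (√B * h) ^ 2 := by gcongr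
    _ = B * h ^ 2 := by rw [mul_pow, Real.sq_sqrt hB₀]

theorem sq_fwdDiff_iter_le_integral_sq_iteratedDeriv {h : ℝ} (hh : 0 ≤ h) (n : ℕ) {f : ℝ → ℝ}
    (hf : ContDiff ℝ (n + 1) f) (a : ℝ) :
    (Δ_[h])^[n + 1] f a ^ 2 ≤
      h ^ (2 * n + 1) * ∫ s in a..a + (n + 1) * h, iteratedDeriv (n + 1) f s ^ 2 := by
  induction n generalizing f a with
  | zero =>
    have hd : Differentiable ℝ f := hf.differentiable (by simp)
    have hcont : Continuous (deriv f) := by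
      simpa using hf.continuous_iteratedDeriv' 1
    have hftc : ∫ s in a..a + h, deriv f s = Δ_[h] f a :=
      integral_deriv_eq_sub (fun x _ => hd x) (hcont.intervalIntegrable _ _)
    simpa [← hftc] using sq_intervalIntegral_le_mul_intervalIntegral_sq (by linarith)
      (hcont.intervalIntegrable a (a + h)) ((hcont.pow 2).intervalIntegrable a (a + h))
  | succ n ih =>
    obtain ⟨hd, -, hf'⟩ := contDiff_succ_iff_deriv.1 hf
    set I := ∫ s in a..a + (↑(n + 1) + 1) * h, iteratedDeriv (n + 1 + 1) f s ^ 2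
    have hcont : Continuous (iteratedDeriv (n + 1 + 1) f) :=
      hf.continuous_iteratedDeriv' _
    have hsub : ∀ x ∈ Icc a (a + h),
        ∫ s in x..x + (n + 1) * h, iteratedDeriv (n + 1 + 1) f s ^ 2 ≤ I := fun x hx =>
      integral_mono_interval hx.1 (by nlinarith [hx.1]) (by push_cast; nlinarith [hx.2])
        (Filter.Eventually.of_forall fun s => sq_nonneg _)
        ((hcont.pow 2).intervalIntegrable _ _)
    have hderiv : ∀ x ∈ Icc a (a + h),
        (Δ_[h])^[n + 1] (deriv f) x ^ 2 ≤ h ^ (2 * n + 1) * I := fun x hx => by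
      have := ih (by exact_mod_cast hf') x
      rw [← iteratedDeriv_succ'] at this
      exact this.trans (by gcongr; exact hsub x hx)
    calc (Δ_[h])^[n + 1 + 1] f a ^ 2
        ≤ h ^ (2 * n + 1) * I * h ^ 2 := by
          rw [Function.iterate_succ_apply']
          exact sq_fwdDiff_le_of_sq_deriv_le hh
            (fun x _ => hasDerivAt_fwdDiff_iter (fun y => (hd y).hasDerivAt) h _ x)
            hderiv
      _ = h ^ (2 * (n + 1) + 1) * I := by ring

theorem third_difference_bound
    (u : ℝ → ℝ) (hu : ContDiff ℝ 3 u) (t₀ Δt : ℝ) (hΔt : 0 < Δt) :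
    |u (t₀ + 3*Δt) - 3 * u (t₀ + 2*Δt) + 3 * u (t₀ + 1*Δt) - u t₀| ^ 2 ≤
      9 * Δt^5 * ∫ s in t₀..(t₀ + 3*Δt), |iteratedDeriv 3 u s| ^ 2 := by
  have hdiff : u (t₀ + 3*Δt) - 3 * u (t₀ + 2*Δt) + 3 * u (t₀ + 1*Δt) - u t₀ =
      Δ_[Δt] (Δ_[Δt] (Δ_[Δt] u)) t₀ := by
    simp only [fwdDiff]
    ring_nf
  have hbound := sq_fwdDiff_iter_le_integral_sq_iteratedDeriv hΔt.le 2 hu t₀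
  norm_num at hbound
  have hI : 0 ≤ ∫ s in t₀..(t₀ + 3*Δt), iteratedDeriv 3 u s ^ 2 :=
    integral_nonneg (by linarith) fun s _ => sq_nonneg _
  simp_rw [hdiff, sq_abs]
  linarith [mul_nonneg (pow_pos hΔt 5).le hI]
end

section
/- Let u : ℝ → ℝ be three times continuously differentiable, Δt > 0, and t_k = t₀ + kΔt for k = 0,…,3. Then u(t₃) − 3u(t₂) + 3u(t₁) − u(t₀) = (Δt²/2)(∫_{t₂}^{t₃} u''' dt + ∫_{t₀}^{t₁} u''' dt) − Δt(∫_{t₁}^{t₃}(t − t₂)u''' dt − ∫_{t₀}^{t₂}(t − t₁)u''' dt) + (1/2)(∫_{t₂}^{t₃}(t − t₂)²u''' dt − ∫_{t₁}^{t₂}(t − t₂)²u''' dt) − (1/2)(∫_{t₁}^{t₂}(t − t₁)²u''' dt − ∫_{t₀}^{t₁}(t − t₁)²u''' dt). -/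
/-!
Integrating by parts, each integral of `(t - c) ^ k * u'''` with `k ≤ 2` becomes an explicit
combination of the values of `u`, `u'` and `u''` at the end points. Substituting these
expressions, all terms involving `u'` and `u''` cancel and the third difference remains.
-/

open intervalIntegral

theorem integral_sub_pow_succ_mul_deriv {g g' : ℝ → ℝ} (hg : ∀ x, HasDerivAt g (g' x) x)
    (hg' : Continuous g') (n : ℕ) (a b c : ℝ) :
    ∫ t in a..b, (t - c) ^ (n + 1) * g' t
      = (b - c) ^ (n + 1) * g b - (a - c) ^ (n + 1) * g a
        - (n + 1) * ∫ t in a..b, (t - c) ^ n * g t := by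
  have hpow : ∀ x, HasDerivAt (fun t => (t - c) ^ (n + 1)) ((n + 1) * (x - c) ^ n) x := by
    intro x
    simpa using ((hasDerivAt_id x).sub_const c).fun_pow (n + 1)
  rw [integral_mul_deriv_eq_deriv_mul (fun x _ => hpow x) (fun x _ => hg x)
      (Continuous.intervalIntegrable (by fun_prop) a b) (hg'.intervalIntegrable a b),
    ← integral_const_mul]
  simp only [mul_assoc]

theorem ContDiff.hasDerivAt_iteratedDeriv {u : ℝ → ℝ} {n k : ℕ} (hu : ContDiff ℝ n u)
    (hk : k < n) (x : ℝ) : HasDerivAt (iteratedDeriv k u) (iteratedDeriv (k + 1) u x) x := by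
  rw [iteratedDeriv_succ]
  exact ((hu.differentiable_iteratedDeriv k (mod_cast hk)) x).hasDerivAt

theorem ContDiff.integral_iteratedDeriv_succ {u : ℝ → ℝ} {n k : ℕ} (hu : ContDiff ℝ n u)
    (hk : k < n) (a b : ℝ) :
    ∫ t in a..b, iteratedDeriv (k + 1) u t = iteratedDeriv k u b - iteratedDeriv k u a :=
  integral_eq_sub_of_hasDerivAt (fun x _ => hu.hasDerivAt_iteratedDeriv hk x)
    ((hu.continuous_iteratedDeriv (k + 1) (mod_cast hk)).intervalIntegrable a b)

section ThirdDerivative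

variable {u : ℝ → ℝ} (hu : ContDiff ℝ 3 u) (a b c : ℝ)
include hu

theorem integral_sub_mul_iteratedDeriv_three :
    ∫ t in a..b, (t - c) * iteratedDeriv 3 u t
      = (b - c) * iteratedDeriv 2 u b - (a - c) * iteratedDeriv 2 u a
        - (iteratedDeriv 1 u b - iteratedDeriv 1 u a) := by
  have h := integral_sub_pow_succ_mul_deriv (hu.hasDerivAt_iteratedDeriv (k := 2) (by norm_num))
    (hu.continuous_iteratedDeriv 3 le_rfl) 0 a b c
  simp only [zero_add, pow_one, pow_zero, one_mul, CharP.cast_eq_zero] at h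
  rw [h, hu.integral_iteratedDeriv_succ (k := 1) (by norm_num)]

theorem integral_sub_sq_mul_iteratedDeriv_three :
    ∫ t in a..b, (t - c) ^ 2 * iteratedDeriv 3 u t
      = (b - c) ^ 2 * iteratedDeriv 2 u b - (a - c) ^ 2 * iteratedDeriv 2 u a
        - 2 * ((b - c) * iteratedDeriv 1 u b - (a - c) * iteratedDeriv 1 u a - (u b - u a)) := by
  have h := integral_sub_pow_succ_mul_deriv (hu.hasDerivAt_iteratedDeriv (k := 2) (by norm_num))
    (hu.continuous_iteratedDeriv 3 le_rfl) 1 a b c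
  have h' := integral_sub_pow_succ_mul_deriv (hu.hasDerivAt_iteratedDeriv (k := 1) (by norm_num))
    (hu.continuous_iteratedDeriv 2 (by norm_num)) 0 a b c
  simp only [zero_add, pow_one, pow_zero, one_mul, CharP.cast_eq_zero] at h h'
  rw [h, h', hu.integral_iteratedDeriv_succ (k := 0) (by norm_num), iteratedDeriv_zero]
  norm_num

end ThirdDerivative

theorem third_difference_integral_representation_general
    (u : ℝ → ℝ) (hu : ContDiff ℝ 3 u) (t₀ Δt : ℝ) :
    u (t₀ + 3*Δt) - 3 * u (t₀ + 2*Δt) + 3 * u (t₀ + 1*Δt) - u t₀ =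
      (Δt^2/2) * ((∫ t in (t₀ + 2*Δt)..(t₀ + 3*Δt), iteratedDeriv 3 u t)
          + ∫ t in t₀..(t₀ + 1*Δt), iteratedDeriv 3 u t)
        - Δt * ((∫ t in (t₀ + 1*Δt)..(t₀ + 3*Δt), (t - (t₀ + 2*Δt)) * iteratedDeriv 3 u t)
          - ∫ t in t₀..(t₀ + 2*Δt), (t - (t₀ + 1*Δt)) * iteratedDeriv 3 u t)
        + (1/2) * ((∫ t in (t₀ + 2*Δt)..(t₀ + 3*Δt), (t - (t₀ + 2*Δt))^2 * iteratedDeriv 3 u t)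
          - ∫ t in (t₀ + 1*Δt)..(t₀ + 2*Δt), (t - (t₀ + 2*Δt))^2 * iteratedDeriv 3 u t)
        - (1/2) * ((∫ t in (t₀ + 1*Δt)..(t₀ + 2*Δt), (t - (t₀ + 1*Δt))^2 * iteratedDeriv 3 u t)
          - ∫ t in t₀..(t₀ + 1*Δt), (t - (t₀ + 1*Δt))^2 * iteratedDeriv 3 u t) := by
  simp only [hu.integral_iteratedDeriv_succ (k := 2) (by norm_num),
    integral_sub_mul_iteratedDeriv_three hu, integral_sub_sq_mul_iteratedDeriv_three hu]
  ring

theorem third_difference_integral_representation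
    (u : ℝ → ℝ) (hu : ContDiff ℝ 3 u) (t₀ Δt : ℝ) (hΔt : 0 < Δt) :
    u (t₀ + 3*Δt) - 3 * u (t₀ + 2*Δt) + 3 * u (t₀ + 1*Δt) - u t₀ =
      (Δt^2/2) * ((∫ t in (t₀ + 2*Δt)..(t₀ + 3*Δt), iteratedDeriv 3 u t)
          + ∫ t in t₀..(t₀ + 1*Δt), iteratedDeriv 3 u t)
        - Δt * ((∫ t in (t₀ + 1*Δt)..(t₀ + 3*Δt), (t - (t₀ + 2*Δt)) * iteratedDeriv 3 u t)
          - ∫ t in t₀..(t₀ + 2*Δt), (t - (t₀ + 1*Δt)) * iteratedDeriv 3 u t)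
        + (1/2) * ((∫ t in (t₀ + 2*Δt)..(t₀ + 3*Δt), (t - (t₀ + 2*Δt))^2 * iteratedDeriv 3 u t)
          - ∫ t in (t₀ + 1*Δt)..(t₀ + 2*Δt), (t - (t₀ + 2*Δt))^2 * iteratedDeriv 3 u t)
        - (1/2) * ((∫ t in (t₀ + 1*Δt)..(t₀ + 2*Δt), (t - (t₀ + 1*Δt))^2 * iteratedDeriv 3 u t)
          - ∫ t in t₀..(t₀ + 1*Δt), (t - (t₀ + 1*Δt))^2 * iteratedDeriv 3 u t) :=
  third_difference_integral_representation_general u hu t₀ Δt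
end
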